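/- Let A and B be abelian categories and let F : A ⥤ B be an exact functor, i.e. F preserves finite limits and finite colimits. If F is conservative (reflects isomorphisms), then the induced functor Ind F : Ind A ⥤ Ind B between ind-completions — the unique extension of F along the Yoneda functors A → Ind A and B → Ind B that preserves filtered colimits — is conservative. -/

import Mathlib

/-!
Present an ind-object as a filtered colimit of representables `yoneda (G i)`: maps
`yoneda a ⟶ X` are germs of maps `a ⟶ G i`, and `Ind F` acts on germs by `F`. An exact
conservative functor is faithful, hence so is `Ind F`, and a morphism `f` with `Ind F f`
invertible is a monomorphism. Given `t : yoneda a ⟶ Y`, a preimage of `Ind F t` under `Ind F f`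
yields, at a large enough stage, maps `α : c ⟶ z`, `τ : a ⟶ z` and `s : F a ⟶ F c` with
`s ≫ F α = F τ`. Then `F` sends the projection `p` from the pullback of `α` and `τ` to `a` to a
split epimorphism, so `p` is an epimorphism, and `yoneda p ≫ t` lifts through `f`. As `f` is
mono, the lift descends along the regular epimorphism `yoneda p`. A monomorphism through which
every map from a representable lifts is an isomorphism.
-/

open CategoryTheory Limits Opposite

universe v u₁ u₂

namespace CategoryTheory

variable {C : Type u₁} [Category.{v} C] {D : Type u₂} [Category.{v} D]

theorem Functor.faithful_of_reflectsIsomorphisms (F : C ⥤ D) [HasEqualizers C]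
    [PreservesLimitsOfShape WalkingParallelPair F] [F.ReflectsIsomorphisms] : F.Faithful where
  map_injective {_ _ f g} h := by
    have : IsIso (F.map (equalizer.ι f g)) := isIso_limit_cone_parallelPair_of_eq h
      (isLimitForkMapOfIsLimit F _ (equalizerIsEqualizer f g))
    have := isIso_of_reflects_iso (equalizer.ι f g) F
    exact eq_of_epi_equalizer

theorem Functor.isRegularEpi_map (F : C ⥤ D) [PreservesColimitsOfShape WalkingParallelPair F]
    {X Y : C} (p : X ⟶ Y) [IsRegularEpi p] : IsRegularEpi (F.map p) :=
  isRegularEpi_of_regularEpi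
    { W := F.obj (IsRegularEpi.W p)
      left := F.map (IsRegularEpi.left p)
      right := F.map (IsRegularEpi.right p)
      w := by simp only [← F.map_comp, IsRegularEpi.w]
      isColimit := isColimitCoforkMapOfIsColimit F _ (IsRegularEpi.isColimit p) }

theorem Functor.epi_pullback_snd_of_map_factor (F : C ⥤ D) {c d z : C} (α : c ⟶ z)
    (τ : d ⟶ z) [HasPullback α τ] [PreservesLimit (cospan α τ) F] [F.ReflectsEpimorphisms]
    (s : F.obj d ⟶ F.obj c) (hs : s ≫ F.map α = F.map τ) : Epi (pullback.snd α τ) := by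
  obtain ⟨l, -, hl⟩ := PullbackCone.IsLimit.lift' (isLimitOfHasPullbackOfPreservesLimit F α τ)
    s (𝟙 _) (by simpa using hs)
  have : IsSplitEpi (F.map (pullback.snd α τ)) := IsSplitEpi.mk' ⟨l, hl⟩
  exact F.epi_of_epi_map inferInstance

namespace Ind

noncomputable def coyonedaObjYonedaIso (a : C) :
    coyoneda.obj (op (Ind.yoneda.obj a)) ≅
      Ind.inclusion C ⋙ (evaluation Cᵒᵖ (Type v)).obj (op a) :=
  NatIso.ofComponents
    (fun X => Equiv.toIso <| Ind.inclusion.fullyFaithful.homEquiv.trans <|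
      (Ind.yonedaCompInclusion.app a).homCongr (Iso.refl _) |>.trans yonedaEquiv)
    (fun f => by ext; simp [Iso.homCongr, Functor.FullyFaithful.homEquiv, yonedaEquiv_comp])

noncomputable instance (a : C) (I : Type v) [SmallCategory I] [IsFiltered I] :
    PreservesColimitsOfShape I (coyoneda.obj (op (Ind.yoneda.obj a))) :=
  preservesColimitsOfShape_of_natIso (coyonedaObjYonedaIso a).symm

noncomputable def presentationCocone (X : Ind C) : Cocone (X.presentation.F ⋙ Ind.yoneda) :=
  (colimit.cocone _).extend X.colimitPresentationCompYoneda.hom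

noncomputable def isColimitPresentationCocone (X : Ind C) : IsColimit X.presentationCocone :=
  (colimit.isColimit _).extendIso _

section FilteredColimit

variable {I : Type v} [SmallCategory I] [IsFiltered I] {G : I ⥤ C}
  {c : Cocone (G ⋙ Ind.yoneda)}

theorem exists_eq_yoneda_map_comp_ι (hc : IsColimit c) {a : C} (h : Ind.yoneda.obj a ⟶ c.pt) :
    ∃ (i : I) (g : a ⟶ G.obj i), h = Ind.yoneda.map g ≫ c.ι.app i := by
  obtain ⟨i, u, hu⟩ := Types.jointly_surjective _
    (isColimitOfPreserves (coyoneda.obj (op (Ind.yoneda.obj a))) hc) h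
  obtain ⟨g, rfl⟩ := Ind.yoneda.map_surjective u
  exact ⟨i, g, hu.symm⟩

theorem yoneda_map_comp_ι_eq_iff (hc : IsColimit c) {a : C} {i j : I} (g : a ⟶ G.obj i)
    (g' : a ⟶ G.obj j) :
    Ind.yoneda.map g ≫ c.ι.app i = Ind.yoneda.map g' ≫ c.ι.app j ↔
      ∃ (k : I) (φ : i ⟶ k) (φ' : j ⟶ k), g ≫ G.map φ = g' ≫ G.map φ' := by
  refine (Types.FilteredColimit.isColimit_eq_iff _
    (isColimitOfPreserves (coyoneda.obj (op (Ind.yoneda.obj a))) hc)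
    (xi := Ind.yoneda.map g) (xj := Ind.yoneda.map g')).trans ?_
  simp [← Functor.map_comp, Ind.yoneda.map_injective.eq_iff]

end FilteredColimit

theorem isIso_of_bijective {X Y : Ind C} (f : X ⟶ Y)
    (hf : ∀ a : C, Function.Bijective fun u : Ind.yoneda.obj a ⟶ X => u ≫ f) : IsIso f := by
  have (a : Cᵒᵖ) : IsIso (((Ind.inclusion C).map f).app a) :=
    (NatIso.isIso_map_iff (coyonedaObjYonedaIso a.unop) f).1 ((isIso_iff_bijective _).2 (hf _))
  have : IsIso ((Ind.inclusion C).map f) := NatIso.isIso_of_isIso_app _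
  exact isIso_of_reflects_iso f (Ind.inclusion C)

theorem exists_comp_eq_of_isRegularEpi {X Y : Ind C} (f : X ⟶ Y) [Mono f] {P a : C}
    (p : P ⟶ a) [IsRegularEpi p] (q : Ind.yoneda.obj P ⟶ X) (t : Ind.yoneda.obj a ⟶ Y)
    (h : q ≫ f = Ind.yoneda.map p ≫ t) : ∃ u, u ≫ f = t := by
  have := Ind.yoneda.isRegularEpi_map p
  exact ⟨(CommSq.mk h).lift, (CommSq.mk h).fac_right⟩

end Ind

namespace IndExtension

variable {F : C ⥤ D} {IndF : Ind C ⥤ Ind D}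

section Cocone

variable {I : Type v} [SmallCategory I] {G : I ⥤ C}

noncomputable def mapCocone (e : Ind.yoneda ⋙ IndF ≅ F ⋙ Ind.yoneda)
    (c : Cocone (G ⋙ Ind.yoneda)) : Cocone ((G ⋙ F) ⋙ Ind.yoneda) :=
  (Cocone.precompose (Functor.isoWhiskerLeft G e).inv).obj (IndF.mapCocone c)

noncomputable def isColimitMapCocone [PreservesColimitsOfShape I IndF]
    (e : Ind.yoneda ⋙ IndF ≅ F ⋙ Ind.yoneda) {c : Cocone (G ⋙ Ind.yoneda)}
    (hc : IsColimit c) : IsColimit (mapCocone e c) :=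
  (IsColimit.precomposeInvEquiv _ _).symm (isColimitOfPreserves IndF hc)

theorem map_yoneda_map_comp_ι (e : Ind.yoneda ⋙ IndF ≅ F ⋙ Ind.yoneda)
    (c : Cocone (G ⋙ Ind.yoneda)) {a : C} {i : I} (g : a ⟶ G.obj i) :
    e.inv.app a ≫ IndF.map (Ind.yoneda.map g ≫ c.ι.app i) =
      Ind.yoneda.map (F.map g) ≫ (mapCocone e c).ι.app i := by
  have := e.inv.naturality g
  dsimp at this
  rw [IndF.map_comp, ← reassoc_of% this]
  rfl

end Cocone

variable [PreservesFilteredColimits IndF]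

theorem exists_eq_yoneda_map_comp (e : Ind.yoneda ⋙ IndF ≅ F ⋙ Ind.yoneda) {X : Ind C} {a : D}
    (s : Ind.yoneda.obj a ⟶ IndF.obj X) :
    ∃ (b : C) (s₀ : a ⟶ F.obj b) (x : Ind.yoneda.obj b ⟶ X),
      s = Ind.yoneda.map s₀ ≫ e.inv.app b ≫ IndF.map x := by
  obtain ⟨i, s₀, hs⟩ := Ind.exists_eq_yoneda_map_comp_ι
    (isColimitMapCocone e X.isColimitPresentationCocone) s
  exact ⟨_, s₀, _, hs⟩

theorem exists_common_factor_of_map_eq (e : Ind.yoneda ⋙ IndF ≅ F ⋙ Ind.yoneda) {Y : Ind C}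
    {a b : C} (g : Ind.yoneda.obj b ⟶ Y) (t : Ind.yoneda.obj a ⟶ Y) (s : F.obj a ⟶ F.obj b)
    (h : Ind.yoneda.map s ≫ e.inv.app b ≫ IndF.map g = e.inv.app a ≫ IndF.map t) :
    ∃ (z : C) (α : b ⟶ z) (τ : a ⟶ z) (w : Ind.yoneda.obj z ⟶ Y),
      g = Ind.yoneda.map α ≫ w ∧ t = Ind.yoneda.map τ ≫ w ∧ s ≫ F.map α = F.map τ := by
  let c := Y.presentationCocone
  have hc : IsColimit c := Y.isColimitPresentationCocone
  obtain ⟨i, g₀, hg⟩ := Ind.exists_eq_yoneda_map_comp_ι hc g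
  obtain ⟨j, t₀, ht⟩ := Ind.exists_eq_yoneda_map_comp_ι hc t
  have hg' : e.inv.app b ≫ IndF.map g = Ind.yoneda.map (F.map g₀) ≫ (mapCocone e c).ι.app i := by
    rw [hg]; exact map_yoneda_map_comp_ι e c g₀
  have ht' : e.inv.app a ≫ IndF.map t = Ind.yoneda.map (F.map t₀) ≫ (mapCocone e c).ι.app j := by
    rw [ht]; exact map_yoneda_map_comp_ι e c t₀
  have h' : Ind.yoneda.map (s ≫ F.map g₀) ≫ (mapCocone e c).ι.app i =
      Ind.yoneda.map (F.map t₀) ≫ (mapCocone e c).ι.app j := by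
    rw [Functor.map_comp, Category.assoc, ← hg', ← ht']
    exact h
  obtain ⟨k, φ, ψ, hk⟩ := (Ind.yoneda_map_comp_ι_eq_iff (isColimitMapCocone e hc) _ _).1 h'
  refine ⟨_, g₀ ≫ Y.presentation.F.map φ, t₀ ≫ Y.presentation.F.map ψ, c.ι.app k, ?_, ?_, ?_⟩
  · exact hg.trans ((Ind.yoneda_map_comp_ι_eq_iff hc _ _).2 ⟨k, φ, 𝟙 k, by simp⟩)
  · exact ht.trans ((Ind.yoneda_map_comp_ι_eq_iff hc _ _).2 ⟨k, ψ, 𝟙 k, by simp⟩)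
  · simpa using hk

theorem faithful (e : Ind.yoneda ⋙ IndF ≅ F ⋙ Ind.yoneda) [F.Faithful] : IndF.Faithful where
  map_injective {_ _} f g h := Ind.isSeparating_range_yoneda _ _ (by
    rintro _ ⟨a⟩ u
    obtain ⟨z, α, τ, w, hα, hτ, hατ⟩ :=
      exists_common_factor_of_map_eq e (u ≫ f) (u ≫ g) (𝟙 _) (by simp [h])
    obtain rfl : α = τ := F.map_injective (by simpa using hατ)
    rw [hα, hτ])

theorem exists_epi_lift_of_isSplitEpi_map [HasPullbacks C]
    [PreservesLimitsOfShape WalkingCospan F] [F.ReflectsEpimorphisms]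
    (e : Ind.yoneda ⋙ IndF ≅ F ⋙ Ind.yoneda) {X Y : Ind C} (f : X ⟶ Y)
    [IsSplitEpi (IndF.map f)] {a : C} (t : Ind.yoneda.obj a ⟶ Y) :
    ∃ (P : C) (p : P ⟶ a) (q : Ind.yoneda.obj P ⟶ X),
      Epi p ∧ q ≫ f = Ind.yoneda.map p ≫ t := by
  obtain ⟨b, s, x, hs⟩ :=
    exists_eq_yoneda_map_comp e (e.inv.app a ≫ IndF.map t ≫ section_ (IndF.map f))
  obtain ⟨z, α, τ, w, hα, rfl, hατ⟩ :=
    exists_common_factor_of_map_eq e (x ≫ f) t s (by simpa using hs.symm =≫ IndF.map f)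
  refine ⟨pullback α τ, pullback.snd α τ, Ind.yoneda.map (pullback.fst α τ) ≫ x,
    F.epi_pullback_snd_of_map_factor α τ s hατ, ?_⟩
  rw [Category.assoc, hα, ← Category.assoc, ← Functor.map_comp, pullback.condition,
    Functor.map_comp, Category.assoc]

end IndExtension

end CategoryTheory

open CategoryTheory

/-- If `F : A ⥤ B` is an exact (finite-limit- and finite-colimit-preserving) conservative
functor between abelian categories, then the induced functor `Ind F : Ind A ⥤ Ind B` between
ind-completions — the extension of `F` along the Yoneda functors `A ⥤ Ind A` and `B ⥤ Ind B`
that preserves filtered colimits — is conservative. -/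
theorem ind_extension_of_conservative_exact_is_conservative
    {A : Type u₁} [Category.{v} A] {B : Type u₂} [Category.{v} B]
    [Abelian A] [Abelian B]
    (F : A ⥤ B) [PreservesFiniteLimits F] [PreservesFiniteColimits F]
    [F.ReflectsIsomorphisms]
    (IndF : Ind A ⥤ Ind B)
    [∀ (J : Type v) [SmallCategory J] [IsFiltered J], PreservesColimitsOfShape J IndF]
    (e : Ind.yoneda ⋙ IndF ≅ F ⋙ Ind.yoneda) :
    IndF.ReflectsIsomorphisms := by
  have : PreservesFilteredColimits IndF := ⟨fun _ _ _ => inferInstance⟩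
  have := F.faithful_of_reflectsIsomorphisms
  have : ReflectsColimitsOfShape WalkingSpan F := reflectsColimitsOfShape_of_reflectsIsomorphisms
  have := IndExtension.faithful e
  refine ⟨fun {X Y} f _ => ?_⟩
  have : Mono f := IndF.mono_of_mono_map inferInstance
  refine Ind.isIso_of_bijective f fun a => ⟨fun u v => (cancel_mono f).1, fun t => ?_⟩
  obtain ⟨P, p, q, _, hq⟩ := IndExtension.exists_epi_lift_of_isSplitEpi_map e f t
  have := IsRegularEpiCategory.regularEpiOfEpi p
  exact Ind.exists_comp_eq_of_isRegularEpi f p q t hq
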